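/- arXiv:math/9911110 — 3 statements merged into one kernel-verified Lean document; each statement's English description precedes it below -/
import Mathlib

section
/- Let X be a closed subspace of a Banach space Y and suppose X is an M-ideal in Y. Then X is proximinal in Y: for every y ∈ Y there exists x₀ ∈ X with ‖y − x₀‖ = dist(y, X). Consequently, for every e₀ in the quotient Y/X there exists y₀ ∈ Y with π(y₀) = e₀ and ‖y₀‖ = ‖e₀‖, where π : Y → Y/X is the quotient map. -/
open NormedSpace Metric Filter

/-- The annihilator of a set `S ⊆ Y` in the continuous dual of `Y`. -/
noncomputable def setAnnihilator {Y : Type*} [NormedAddCommGroup Y] [NormedSpace ℝ Y]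
    (S : Set Y) : Submodule ℝ (StrongDual ℝ Y) where
  carrier := {f | ∀ y ∈ S, f y = 0}
  add_mem' := by intro f g hf hg y hy; simp [hf y hy, hg y hy]
  zero_mem' := by intro y hy; simp
  smul_mem' := by intro c f hf y hy; simp [hf y hy]

private lemma opNorm_mul_le_of_ball {Y : Type*} [NormedAddCommGroup Y] [NormedSpace ℝ Y]
    (g : Y →L[ℝ] ℝ) {ρ c : ℝ} (hρ : 0 < ρ) (h : ∀ v : Y, ‖v‖ ≤ ρ → g v ≤ c) :
    ‖g‖ * ρ ≤ c := by
  have hc : 0 ≤ c := by simpa using h 0 (by simp [le_of_lt hρ])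
  have hb : ‖g‖ ≤ c / ρ := by
    apply ContinuousLinearMap.opNorm_le_bound _ (div_nonneg hc hρ.le)
    intro x
    rcases eq_or_ne x 0 with rfl | hx
    · simp
    · have hxn : 0 < ‖x‖ := norm_pos_iff.2 hx
      have h1 : g ((ρ / ‖x‖) • x) ≤ c := by
        apply h
        rw [norm_smul, Real.norm_eq_abs, abs_of_pos (by positivity)]
        field_simp
        exact le_rfl
      have h2 : g ((ρ / ‖x‖) • (-x)) ≤ c := by
        apply h
        rw [norm_smul, Real.norm_eq_abs, abs_of_pos (by positivity), norm_neg]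
        field_simp
        exact le_rfl
      rw [map_smul, smul_eq_mul] at h1
      rw [map_smul, map_neg, smul_eq_mul] at h2
      have habs : (ρ / ‖x‖) * |g x| ≤ c := by
        rcases abs_cases (g x) with ⟨he, _⟩ | ⟨he, _⟩
        · rw [he]; exact h1
        · rw [he]; simpa [mul_neg] using h2
      rw [Real.norm_eq_abs]
      have hpos : 0 < ρ / ‖x‖ := by positivity
      calc |g x| = (ρ / ‖x‖) * |g x| * (‖x‖ / ρ) := by field_simp
        _ ≤ c * (‖x‖ / ρ) := by
            apply mul_le_mul_of_nonneg_right habs (by positivity)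
        _ = c / ρ * ‖x‖ := by ring
  calc ‖g‖ * ρ ≤ (c / ρ) * ρ := by nlinarith [norm_nonneg g]
    _ = c := by field_simp

private lemma two_ball {Y : Type*} [NormedAddCommGroup Y] [NormedSpace ℝ Y]
    (X : Submodule ℝ Y) (W : Submodule ℝ (StrongDual ℝ Y))
    (hcompl : IsCompl (setAnnihilator (X : Set Y)) W)
    (hL : ∀ f ∈ setAnnihilator (X : Set Y), ∀ w ∈ W, ‖f + w‖ = ‖f‖ + ‖w‖)
    (y₁ y₂ z x₁ x₂ : Y) (r₁ r₂ ε : ℝ) (hε : 0 < ε)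
    (hz₁ : ‖y₁ - z‖ ≤ r₁) (hz₂ : ‖y₂ - z‖ ≤ r₂)
    (hx₁ : x₁ ∈ X) (hx₂ : x₂ ∈ X) (hb₁ : ‖y₁ - x₁‖ ≤ r₁) (hb₂ : ‖y₂ - x₂‖ ≤ r₂) :
    ∃ x ∈ X, ‖y₁ - x‖ ≤ r₁ + ε ∧ ‖y₂ - x‖ ≤ r₂ + ε := by
  have hr₁ : 0 ≤ r₁ := le_trans (norm_nonneg _) hz₁
  have hr₂ : 0 ≤ r₂ := le_trans (norm_nonneg _) hz₂
  by_contra hcon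
  push_neg at hcon
  -- separation setup
  set s : Set (Y × Y) := Metric.ball y₁ (r₁ + ε) ×ˢ Metric.ball y₂ (r₂ + ε) with hs
  set t : Set (Y × Y) := (fun x : Y => (x, x)) '' (X : Set Y) with ht
  have hdisj : Disjoint s t := by
    rw [Set.disjoint_left]
    rintro p ⟨hp1, hp2⟩ ⟨x, hxX, rfl⟩
    have h1 : ‖y₁ - x‖ < r₁ + ε := by
      rw [← dist_eq_norm, dist_comm]; exact hp1
    have h2 : ‖y₂ - x‖ < r₂ + ε := by
      rw [← dist_eq_norm, dist_comm]; exact hp2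
    exact absurd (hcon x hxX h1.le) (not_lt.2 h2.le)
  have hconv_s : Convex ℝ s := (convex_ball _ _).prod (convex_ball _ _)
  have hopen_s : IsOpen s := isOpen_ball.prod isOpen_ball
  have hconv_t : Convex ℝ t :=
    X.convex.linear_image (LinearMap.prod LinearMap.id LinearMap.id)
  obtain ⟨f, u, hfs, hft⟩ := geometric_hahn_banach_open hconv_s hopen_s hconv_t hdisj
  set f₁ : Y →L[ℝ] ℝ := f.comp (ContinuousLinearMap.inl ℝ Y Y) with hf₁
  set f₂ : Y →L[ℝ] ℝ := f.comp (ContinuousLinearMap.inr ℝ Y Y) with hf₂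
  have hsum : ∀ a b : Y, f (a, b) = f₁ a + f₂ b := by
    intro a b
    have h : (a, b) = ((a, (0 : Y)) + ((0 : Y), b)) := by simp
    rw [h, map_add]
    rfl
  -- f₁ + f₂ vanishes on X, and u ≤ 0
  have hlb : ∀ x ∈ X, u ≤ f₁ x + f₂ x := by
    intro x hx
    have := hft (x, x) ⟨x, hx, rfl⟩
    rwa [hsum] at this
  have hann : ∀ x ∈ X, f₁ x + f₂ x = 0 := by
    intro x hx
    by_contra hne
    have h1 := hlb (((u - 1) / (f₁ x + f₂ x)) • x) (X.smul_mem _ hx)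
    rw [map_smul, map_smul, smul_eq_mul, smul_eq_mul] at h1
    have : (u - 1) / (f₁ x + f₂ x) * f₁ x + (u - 1) / (f₁ x + f₂ x) * f₂ x = u - 1 := by
      field_simp
    linarith [h1, this]
  have hu0 : u ≤ 0 := by
    have := hlb 0 X.zero_mem
    simpa using this
  -- main norm estimate
  have hρ₁ : 0 < r₁ + ε / 2 := by linarith
  have hρ₂ : 0 < r₂ + ε / 2 := by linarith
  have hball : ∀ v w : Y, ‖v‖ ≤ r₁ + ε / 2 → ‖w‖ ≤ r₂ + ε / 2 →
      f₁ (y₁ + v) + f₂ (y₂ + w) < u := by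
    intro v w hv hw
    have hmem : (y₁ + v, y₂ + w) ∈ s := by
      constructor
      · rw [Metric.mem_ball, dist_eq_norm]
        simpa using lt_of_le_of_lt hv (by linarith)
      · rw [Metric.mem_ball, dist_eq_norm]
        simpa using lt_of_le_of_lt hw (by linarith)
    have := hfs _ hmem
    rwa [hsum] at this
  have hstep1 : ∀ v : Y, ‖v‖ ≤ r₁ + ε / 2 →
      ‖f₂‖ * (r₂ + ε / 2) ≤ u - f₁ y₁ - f₁ v - f₂ y₂ := by
    intro v hv
    apply opNorm_mul_le_of_ball _ hρ₂
    intro w hw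
    have := hball v w hv hw
    simp only [map_add] at this
    linarith
  have hmain : ‖f₁‖ * (r₁ + ε / 2) + ‖f₂‖ * (r₂ + ε / 2) + f₁ y₁ + f₂ y₂ ≤ u := by
    have h1 : ‖f₁‖ * (r₁ + ε / 2) ≤ u - f₂ y₂ - ‖f₂‖ * (r₂ + ε / 2) - f₁ y₁ := by
      apply opNorm_mul_le_of_ball _ hρ₁
      intro v hv
      have := hstep1 v hv
      linarith
    linarith
  -- decompose f₁ and f₂
  obtain ⟨g₁, w₁, hg₁, hw₁, hfw₁⟩ :=
    Submodule.codisjoint_iff_exists_add_eq.mp hcompl.codisjoint f₁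
  obtain ⟨g₂, w₂, hg₂, hw₂, hfw₂⟩ :=
    Submodule.codisjoint_iff_exists_add_eq.mp hcompl.codisjoint f₂
  have hannmem : f₁ + f₂ ∈ setAnnihilator (X : Set Y) := by
    intro x hx
    exact hann x hx
  have hwsum : w₁ + w₂ = 0 := by
    have hmem1 : w₁ + w₂ ∈ setAnnihilator (X : Set Y) := by
      have : w₁ + w₂ = (f₁ + f₂) - (g₁ + g₂) := by
        rw [← hfw₁, ← hfw₂]; abel
      rw [this]
      exact Submodule.sub_mem _ hannmem (Submodule.add_mem _ hg₁ hg₂)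
    exact (Submodule.disjoint_def.mp hcompl.disjoint) _ hmem1 (Submodule.add_mem _ hw₁ hw₂)
  have hw₂eq : w₂ = -w₁ := eq_neg_of_add_eq_zero_right hwsum
  -- norms of the pieces
  have hn₁ : ‖f₁‖ = ‖g₁‖ + ‖w₁‖ := by rw [← hfw₁]; exact hL g₁ hg₁ w₁ hw₁
  have hn₂ : ‖f₂‖ = ‖g₂‖ + ‖w₁‖ := by
    rw [← hfw₂, hL g₂ hg₂ w₂ hw₂, hw₂eq, norm_neg]
  have happ₁ : f₁ y₁ = g₁ y₁ + w₁ y₁ := by rw [← hfw₁]; rfl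
  have happ₂ : f₂ y₂ = g₂ y₂ - w₁ y₂ := by
    rw [← hfw₂, hw₂eq]
    simp [sub_eq_add_neg]
  -- the three estimates
  have e₁ : -(g₁ y₁) ≤ ‖g₁‖ * r₁ := by
    have h0 : g₁ x₁ = 0 := hg₁ x₁ hx₁
    have hrw : -(g₁ y₁) = g₁ (x₁ - y₁) := by rw [map_sub, h0]; ring
    rw [hrw]
    calc g₁ (x₁ - y₁) ≤ ‖g₁ (x₁ - y₁)‖ := le_abs_self _
      _ ≤ ‖g₁‖ * ‖x₁ - y₁‖ := g₁.le_opNorm _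
      _ = ‖g₁‖ * ‖y₁ - x₁‖ := by rw [norm_sub_rev]
      _ ≤ ‖g₁‖ * r₁ := mul_le_mul_of_nonneg_left hb₁ (norm_nonneg _)
  have e₂ : -(g₂ y₂) ≤ ‖g₂‖ * r₂ := by
    have h0 : g₂ x₂ = 0 := hg₂ x₂ hx₂
    have hrw : -(g₂ y₂) = g₂ (x₂ - y₂) := by rw [map_sub, h0]; ring
    rw [hrw]
    calc g₂ (x₂ - y₂) ≤ ‖g₂ (x₂ - y₂)‖ := le_abs_self _
      _ ≤ ‖g₂‖ * ‖x₂ - y₂‖ := g₂.le_opNorm _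
      _ = ‖g₂‖ * ‖y₂ - x₂‖ := by rw [norm_sub_rev]
      _ ≤ ‖g₂‖ * r₂ := mul_le_mul_of_nonneg_left hb₂ (norm_nonneg _)
  have e₃ : w₁ y₂ - w₁ y₁ ≤ ‖w₁‖ * (r₁ + r₂) := by
    have hrw : w₁ y₂ - w₁ y₁ = w₁ (y₂ - z) + w₁ (z - y₁) := by
      rw [map_sub, map_sub]; ring
    rw [hrw]
    have t1 : w₁ (y₂ - z) ≤ ‖w₁‖ * r₂ :=
      le_trans (le_abs_self _) (le_trans (w₁.le_opNorm _)
        (mul_le_mul_of_nonneg_left hz₂ (norm_nonneg _)))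
    have t2 : w₁ (z - y₁) ≤ ‖w₁‖ * r₁ := by
      have : ‖z - y₁‖ ≤ r₁ := by rwa [norm_sub_rev]
      exact le_trans (le_abs_self _) (le_trans (w₁.le_opNorm _)
        (mul_le_mul_of_nonneg_left this (norm_nonneg _)))
    linarith
  -- combine everything
  have hh : ‖f₁‖ * (r₁ + ε / 2) + ‖f₂‖ * (r₂ + ε / 2) ≤ ‖f₁‖ * r₁ + ‖f₂‖ * r₂ := by
    calc ‖f₁‖ * (r₁ + ε / 2) + ‖f₂‖ * (r₂ + ε / 2)
        ≤ u - f₁ y₁ - f₂ y₂ := by linarith [hmain]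
      _ = u - g₁ y₁ - g₂ y₂ + (w₁ y₂ - w₁ y₁) := by rw [happ₁, happ₂]; ring
      _ ≤ ‖g₁‖ * r₁ + ‖g₂‖ * r₂ + ‖w₁‖ * (r₁ + r₂) := by linarith
      _ = (‖g₁‖ + ‖w₁‖) * r₁ + (‖g₂‖ + ‖w₁‖) * r₂ := by ring
      _ = ‖f₁‖ * r₁ + ‖f₂‖ * r₂ := by rw [hn₁, hn₂]
  have h9 : ‖f₁‖ * (ε / 2) + ‖f₂‖ * (ε / 2) ≤ 0 := by linarith [hh]
  have hf₁0 : f₁ = 0 := by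
    apply norm_le_zero_iff.mp
    by_contra hpos
    push_neg at hpos
    have p1 : 0 < ‖f₁‖ * (ε / 2) := mul_pos hpos (half_pos hε)
    have p2 : 0 ≤ ‖f₂‖ * (ε / 2) := mul_nonneg (norm_nonneg _) (half_pos hε).le
    linarith
  have hf₂0 : f₂ = 0 := by
    apply norm_le_zero_iff.mp
    by_contra hpos
    push_neg at hpos
    have p1 : 0 < ‖f₂‖ * (ε / 2) := mul_pos hpos (half_pos hε)
    have p2 : 0 ≤ ‖f₁‖ * (ε / 2) := mul_nonneg (norm_nonneg _) (half_pos hε).le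
    linarith
  have hmem : (y₁, y₂) ∈ s := ⟨Metric.mem_ball_self (by linarith), Metric.mem_ball_self (by linarith)⟩
  have hlt := hfs _ hmem
  rw [hsum, hf₁0, hf₂0] at hlt
  simp at hlt
  linarith

private lemma norm_mkQ_eq {Y : Type*} [NormedAddCommGroup Y] [NormedSpace ℝ Y]
    (X : Submodule ℝ Y) (y : Y) : ‖X.mkQ y‖ = Metric.infDist y (X : Set Y) :=
  QuotientAddGroup.norm_mk y


/-- M-ideals are proximinal; consequently every element of the quotient admits a
norm-preserving lift. -/
theorem M_ideal_proximinal {Y : Type*} [NormedAddCommGroup Y] [NormedSpace ℝ Y]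
    [CompleteSpace Y] (X : Submodule ℝ Y) (hX : IsClosed (X : Set Y))
    (W : Submodule ℝ (StrongDual ℝ Y)) (hWclosed : IsClosed (W : Set (StrongDual ℝ Y)))
    (hcompl : IsCompl (setAnnihilator (X : Set Y)) W)
    (hL : ∀ f ∈ setAnnihilator (X : Set Y), ∀ w ∈ W, ‖f + w‖ = ‖f‖ + ‖w‖) :
    (∀ y : Y, ∃ x₀ ∈ X, ‖y - x₀‖ = Metric.infDist y (X : Set Y)) ∧
    (∀ e₀ : Y ⧸ X, ∃ y₀ : Y, X.mkQ y₀ = e₀ ∧ ‖y₀‖ = ‖e₀‖) := by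
  have hne : (X : Set Y).Nonempty := ⟨0, X.zero_mem⟩
  have prox : ∀ y : Y, ∃ x₀ ∈ X, ‖y - x₀‖ = Metric.infDist y (X : Set Y) := by
    intro y
    set d := Metric.infDist y (X : Set Y) with hd
    have hd0 : 0 ≤ d := Metric.infDist_nonneg
    -- improvement step
    have key : ∀ a : ℝ, 0 < a → ∀ x ∈ X, ‖y - x‖ ≤ d + a →
        ∃ x' ∈ X, ‖y - x'‖ ≤ d + a / 2 ∧ ‖x - x'‖ ≤ 2 * a := by
      intro a ha x hx hxb
      obtain ⟨x₁', hx₁'X, hx₁'⟩ : ∃ p ∈ (X : Set Y), dist y p < d + a / 4 :=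
        (Metric.infDist_lt_iff hne).mp (by linarith)
      have hz : ∃ zz : Y, ‖y - zz‖ ≤ d + a / 4 ∧ ‖x - zz‖ ≤ a := by
        rcases le_or_gt ‖y - x‖ (d + a / 4) with h | h
        · exact ⟨x, h, by simp [ha.le]⟩
        rcases le_or_gt ‖y - x‖ a with h2 | h2
        · refine ⟨y, by simp; linarith, by rwa [norm_sub_rev]⟩
        · have hn : 0 < ‖y - x‖ := by linarith
          refine ⟨x + (a / ‖y - x‖) • (y - x), ?_, ?_⟩
          · have hrw : y - (x + (a / ‖y - x‖) • (y - x)) = (1 - a / ‖y - x‖) • (y - x) := by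
              rw [sub_smul, one_smul]; abel
            rw [hrw, norm_smul, Real.norm_eq_abs,
              abs_of_nonneg (by rw [sub_nonneg]; exact (div_le_one hn).2 h2.le)]
            have : (1 - a / ‖y - x‖) * ‖y - x‖ = ‖y - x‖ - a := by field_simp
            rw [this]; linarith
          · have hrw : x - (x + (a / ‖y - x‖) • (y - x)) = -((a / ‖y - x‖) • (y - x)) := by
              abel
            rw [hrw, norm_neg, norm_smul, Real.norm_eq_abs, abs_of_pos (by positivity)]
            have : a / ‖y - x‖ * ‖y - x‖ = a := by field_simp
            rw [this]
      obtain ⟨zz, hz1, hz2⟩ := hz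
      obtain ⟨x', hx'X, h1, h2⟩ := two_ball X W hcompl hL y x zz x₁' x
        (d + a / 4) a (a / 4) (by positivity) hz1 hz2 hx₁'X hx
        (by rw [← dist_eq_norm]; exact hx₁'.le) (by simp [ha.le])
      exact ⟨x', hx'X, by linarith, by linarith⟩
    -- build the sequence
    have step : ∀ n : ℕ, ∀ x : Y, ∃ x' : Y,
        (x ∈ X ∧ ‖y - x‖ ≤ d + (1 / 2 : ℝ) ^ n) →
        (x' ∈ X ∧ ‖y - x'‖ ≤ d + (1 / 2 : ℝ) ^ (n + 1) ∧ ‖x - x'‖ ≤ 2 * (1 / 2 : ℝ) ^ n) := by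
      intro n x
      by_cases h : x ∈ X ∧ ‖y - x‖ ≤ d + (1 / 2 : ℝ) ^ n
      · obtain ⟨x', hx'X, h1, h2⟩ := key ((1 / 2 : ℝ) ^ n) (by positivity) x h.1 h.2
        refine ⟨x', fun _ => ⟨hx'X, ?_, h2⟩⟩
        rw [pow_succ]
        linarith
      · exact ⟨x, fun hc => absurd hc h⟩
    choose F hF using step
    obtain ⟨x0, hx0X, hx0⟩ : ∃ p ∈ (X : Set Y), dist y p < d + 1 :=
      (Metric.infDist_lt_iff hne).mp (by linarith)
    set u : ℕ → Y := fun n => Nat.rec x0 (fun n xn => F n xn) n with hu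
    have hus : ∀ n, u (n + 1) = F n (u n) := fun n => rfl
    have hinv : ∀ n, u n ∈ X ∧ ‖y - u n‖ ≤ d + (1 / 2 : ℝ) ^ n := by
      intro n
      induction n with
      | zero =>
          refine ⟨hx0X, ?_⟩
          rw [← dist_eq_norm]
          simp only [pow_zero]; exact hx0.le
      | succ n ih =>
          rw [hus]
          exact ⟨(hF n (u n) ih).1, (hF n (u n) ih).2.1⟩
    have hdist : ∀ n, dist (u n) (u (n + 1)) ≤ 2 * (1 / 2 : ℝ) ^ n := by
      intro n
      rw [dist_eq_norm, hus]
      exact (hF n (u n) (hinv n)).2.2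
    have hcauchy : CauchySeq u := cauchySeq_of_le_geometric (1 / 2 : ℝ) 2 (by norm_num) hdist
    obtain ⟨x₀, hx₀⟩ := cauchySeq_tendsto_of_complete hcauchy
    have hx₀X : x₀ ∈ X := hX.mem_of_tendsto hx₀ (Eventually.of_forall fun n => (hinv n).1)
    refine ⟨x₀, hx₀X, le_antisymm ?_ ?_⟩
    · have h1 : Tendsto (fun n => ‖y - u n‖) atTop (nhds ‖y - x₀‖) :=
        (tendsto_const_nhds.sub hx₀).norm
      have h2 : Tendsto (fun n : ℕ => d + (1 / 2 : ℝ) ^ n) atTop (nhds d) := by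
        have := tendsto_pow_atTop_nhds_zero_of_lt_one (by norm_num : (0:ℝ) ≤ 1/2)
          (by norm_num : (1/2 : ℝ) < 1)
        simpa using tendsto_const_nhds.add this
      exact le_of_tendsto_of_tendsto' h1 h2 fun n => (hinv n).2
    · calc d ≤ dist y x₀ := Metric.infDist_le_dist_of_mem hx₀X
        _ = ‖y - x₀‖ := dist_eq_norm y x₀
  refine ⟨prox, ?_⟩
  intro e₀
  obtain ⟨y, rfl⟩ := X.mkQ_surjective e₀
  obtain ⟨x₀, hx₀X, hx₀⟩ := prox y
  refine ⟨y - x₀, ?_, ?_⟩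
  · rw [map_sub]
    have : X.mkQ x₀ = 0 := (Submodule.Quotient.mk_eq_zero X).2 hx₀X
    rw [this, sub_zero]
  · rw [hx₀]
    exact (norm_mkQ_eq X y).symm
end

section
/- Let X be an M-ideal in a Banach space Y, V a closed linear subspace of X, and L ∈ Y with dist(L, V) = 1. Then for every ε > 0 there exist v_ε ∈ V and L_ε ∈ Y with ‖L_ε‖ ≤ 1 such that ‖(L − v_ε) − L_ε‖ ≤ ε and (L − v_ε) − L_ε ∈ X. -/
open NormedSpace

set_option maxHeartbeats 1000000 in
lemma opNorm_le_of_shell' {E : Type*} [NormedAddCommGroup E] [NormedSpace ℝ E]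
    (f : E →L[ℝ] ℝ) {r c : ℝ} (hr : 0 < r) (hc : 0 ≤ c)
    (h : ∀ z : E, ‖z‖ ≤ r → |f z| ≤ c) : ‖f‖ ≤ c / r := by
  apply f.opNorm_le_bound (by positivity)
  intro z
  by_cases hz : z = 0
  · simp [hz]
  · have hz' : 0 < ‖z‖ := norm_pos_iff.mpr hz
    have h1 : ‖(r / ‖z‖) • z‖ ≤ r := by
      rw [norm_smul, Real.norm_eq_abs, abs_of_pos (by positivity)]
      field_simp
      norm_num
    have h2 := h _ h1
    rw [map_smul, smul_eq_mul, abs_mul, abs_of_pos (by positivity)] at h2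
    rw [div_mul_eq_mul_div, div_le_iff₀ hz'] at h2
    rw [Real.norm_eq_abs, div_mul_eq_mul_div, le_div_iff₀ hr]
    nlinarith [abs_nonneg (f z)]

set_option maxHeartbeats 1000000 in
lemma keyLemma {Y : Type*} [NormedAddCommGroup Y] [NormedSpace ℝ Y]
    (X : Submodule ℝ Y) (W : Submodule ℝ (StrongDual ℝ Y))
    (hsup : setAnnihilator (X : Set Y) ⊔ W = ⊤)
    (hL : ∀ f ∈ setAnnihilator (X : Set Y), ∀ w ∈ W, ‖f + w‖ = ‖f‖ + ‖w‖)
    {y : Y} {r₁ r₂ η : ℝ} (hr₁ : 0 ≤ r₁) (hr₂ : 0 ≤ r₂) (hη : 0 < η)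
    (hdy : Metric.infDist y (X : Set Y) ≤ r₂) (hy : ‖y‖ ≤ r₁ + r₂) :
    ∃ x ∈ X, ‖x‖ ≤ r₁ + η ∧ ‖y - x‖ ≤ r₂ + η := by
  by_contra hcon
  push_neg at hcon
  -- separate the open ball around y from X ∩ closed ball
  have hdisj : Disjoint (Metric.ball y (r₂ + η))
      ((X : Set Y) ∩ Metric.closedBall 0 (r₁ + η)) := by
    rw [Set.disjoint_left]
    rintro a ha ⟨haX, haB⟩
    have h1 : ‖a‖ ≤ r₁ + η := by simpa using Metric.mem_closedBall.mp haB
    have h2 : ‖y - a‖ ≤ r₂ + η := by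
      have := Metric.mem_ball.mp ha
      rw [dist_eq_norm] at this
      rw [← neg_sub a y, norm_neg]
      linarith
    exact absurd h2 (not_le.mpr (hcon a haX h1))
  obtain ⟨f, u, hsu, hut⟩ := geometric_hahn_banach_open
    (convex_ball y (r₂ + η)) Metric.isOpen_ball
    ((X.convex).inter (convex_closedBall 0 (r₁ + η))) hdisj
  have hu0 : u ≤ 0 := by
    have := hut 0 ⟨X.zero_mem, by simp; positivity⟩
    simpa using this
  have hfy : f y < u := hsu y (Metric.mem_ball_self (by positivity))
  -- decompose f = g + w
  obtain ⟨g, hg, w, hw, hgw⟩ := Submodule.mem_sup.mp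
    (by rw [hsup]; exact Submodule.mem_top : f ∈ setAnnihilator (X : Set Y) ⊔ W)
  -- bound on ‖f‖ from the ball side
  have hfn : ‖f‖ ≤ (u - f y) / (r₂ + η / 2) := by
    apply opNorm_le_of_shell' f (by positivity) (by linarith)
    intro z hzn
    have hmem : ∀ z' : Y, ‖z'‖ ≤ r₂ + η / 2 → y + z' ∈ Metric.ball y (r₂ + η) := by
      intro z' hz'
      rw [Metric.mem_ball, dist_eq_norm]
      simp only [add_sub_cancel_left]
      linarith
    have hp := hsu _ (hmem z hzn)
    have hm := hsu _ (hmem (-z) (by rwa [norm_neg]))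
    rw [map_add] at hp hm
    rw [map_neg] at hm
    rw [abs_le]
    constructor <;> linarith
  have h1 : ‖f‖ * (r₂ + η / 2) ≤ u - f y := (le_div_iff₀ (by positivity)).mp hfn
  -- bound on ‖w‖ from the X side
  have hwX : ∀ x : Y, x ∈ X → ‖x‖ ≤ r₁ + η → |w x| ≤ -u := by
    intro x hxX hxn
    have hp := hut x ⟨hxX, by simpa using hxn⟩
    have hm := hut (-x) ⟨X.neg_mem hxX, by simpa using hxn⟩
    have hfx : f x = w x := by
      rw [← hgw]; simp [ContinuousLinearMap.add_apply, hg x hxX]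
    have hfx' : f (-x) = -(w x) := by rw [map_neg, hfx]
    rw [hfx] at hp
    rw [hfx'] at hm
    rw [abs_le]
    constructor <;> linarith
  have hw'n : ‖w.comp X.subtypeL‖ ≤ -u / (r₁ + η) := by
    apply opNorm_le_of_shell' _ (by positivity) (by linarith)
    intro z hzn
    exact hwX z z.2 (by simpa using hzn)
  -- ‖w‖ = ‖w restricted to X‖ via Hahn-Banach extension
  have hwn : ‖w‖ ≤ ‖w.comp X.subtypeL‖ := by
    obtain ⟨F, hF, hFn⟩ := exists_extension_norm_eq X (w.comp X.subtypeL)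
    have hFw : F - w ∈ setAnnihilator (X : Set Y) := by
      intro yy hyy
      have := hF ⟨yy, hyy⟩
      simp only [ContinuousLinearMap.coe_comp', Function.comp_apply,
        Submodule.coe_subtypeL', Submodule.coe_subtype] at this
      simp [ContinuousLinearMap.sub_apply, this]
    have heq := hL (F - w) hFw w hw
    rw [sub_add_cancel] at heq
    rw [heq] at hFn
    have := norm_nonneg (F - w)
    linarith
  have h2 : ‖w‖ * (r₁ + η) ≤ -u := by
    have := hwn.trans hw'n
    exact (le_div_iff₀ (by positivity)).mp this
  -- norms add
  have h3 : ‖f‖ = ‖g‖ + ‖w‖ := by rw [← hgw]; exact hL g hg w hw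
  have h4 : f y = g y + w y := by rw [← hgw]; simp [ContinuousLinearMap.add_apply]
  -- |g y| ≤ ‖g‖ * r₂
  have h5 : |g y| ≤ ‖g‖ * r₂ := by
    apply le_of_forall_pos_le_add
    intro δ hδ
    have hlt : Metric.infDist y (X : Set Y) < r₂ + δ / (‖g‖ + 1) := by
      have : (0:ℝ) < δ / (‖g‖ + 1) := by positivity
      linarith
    obtain ⟨x, hxX, hxd⟩ := (Metric.infDist_lt_iff ⟨0, X.zero_mem⟩).mp hlt
    have hgy : g y = g (y - x) := by rw [map_sub, hg x hxX]; ring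
    have := g.le_opNorm (y - x)
    rw [dist_eq_norm] at hxd
    have habs : |g y| ≤ ‖g‖ * ‖y - x‖ := by
      rw [hgy]; exact (le_of_eq (Real.norm_eq_abs _).symm).trans this
    have hnn : (0:ℝ) ≤ ‖g‖ := norm_nonneg g
    have hd : ‖g‖ * ‖y - x‖ ≤ ‖g‖ * (r₂ + δ / (‖g‖ + 1)) :=
      mul_le_mul_of_nonneg_left hxd.le hnn
    have : ‖g‖ * (δ / (‖g‖ + 1)) ≤ δ := by
      rw [mul_div_assoc']
      rw [div_le_iff₀ (by positivity)]
      nlinarith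
    nlinarith
  have h6 : |w y| ≤ ‖w‖ * (r₁ + r₂) := by
    have := w.le_opNorm y
    rw [Real.norm_eq_abs] at this
    nlinarith [norm_nonneg w]
  -- arithmetic contradiction
  have hgy' : -(‖g‖ * r₂) ≤ g y := neg_le_of_abs_le h5 |>.trans_eq rfl
  have hwy' : -(‖w‖ * (r₁ + r₂)) ≤ w y := neg_le_of_abs_le h6
  have haux : ‖g‖ * η + 3 * (‖w‖ * η) ≤ 0 := by nlinarith [h1, h2, hgy', hwy']
  have ha0 : ‖g‖ = 0 := by
    have p1 : 0 ≤ ‖g‖ * η := mul_nonneg (norm_nonneg g) hη.le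
    have p2 : 0 ≤ ‖w‖ * η := mul_nonneg (norm_nonneg w) hη.le
    have : ‖g‖ * η = 0 := by linarith
    rcases mul_eq_zero.mp this with h | h
    · exact h
    · exact absurd h hη.ne'
  have hb0 : ‖w‖ = 0 := by
    have p1 : 0 ≤ ‖g‖ * η := mul_nonneg (norm_nonneg g) hη.le
    have p2 : 0 ≤ ‖w‖ * η := mul_nonneg (norm_nonneg w) hη.le
    have : ‖w‖ * η = 0 := by linarith
    rcases mul_eq_zero.mp this with h | h
    · exact h
    · exact absurd h hη.ne'
  have hf0 : f = 0 := by
    have : ‖f‖ = 0 := by rw [h3, ha0, hb0]; ring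
    exact norm_eq_zero.mp this
  rw [hf0] at hfy
  simp at hfy
  linarith

set_option maxHeartbeats 1000000
set_option linter.unusedVariables false

/-- If `X` is an M-ideal in `Y`, `V ⊆ X` a closed subspace and `L ∈ Y` with
`dist(L, V) = 1`, then for every `ε > 0` there exist `v_ε ∈ V` and `L_ε` in the unit
ball of `Y` with `‖(L − v_ε) − L_ε‖ ≤ ε` and `(L − v_ε) − L_ε ∈ X`. -/
theorem M_ideal_two_ball_consequence {Y : Type*} [NormedAddCommGroup Y] [NormedSpace ℝ Y]
    [CompleteSpace Y] (X : Submodule ℝ Y) (hX : IsClosed (X : Set Y))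
    (W : Submodule ℝ (StrongDual ℝ Y)) (hWclosed : IsClosed (W : Set (StrongDual ℝ Y)))
    (hcompl : IsCompl (setAnnihilator (X : Set Y)) W)
    (hL : ∀ f ∈ setAnnihilator (X : Set Y), ∀ w ∈ W, ‖f + w‖ = ‖f‖ + ‖w‖)
    (V : Submodule ℝ Y) (hVclosed : IsClosed (V : Set Y)) (hVX : V ≤ X)
    (L : Y) (hdist : Metric.infDist L (V : Set Y) = 1) :
    ∀ ε > (0 : ℝ), ∃ v ∈ V, ∃ Lε : Y, ‖Lε‖ ≤ 1 ∧ ‖(L - v) - Lε‖ ≤ ε ∧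
      (L - v) - Lε ∈ X := by
  intro ε hε
  have hsup : setAnnihilator (X : Set Y) ⊔ W = ⊤ := codisjoint_iff.mp hcompl.codisjoint
  have hVne : (V : Set Y).Nonempty := ⟨0, V.zero_mem⟩
  have hlt : Metric.infDist L (V : Set Y) < 1 + ε / 8 := by rw [hdist]; linarith
  obtain ⟨v, hvV, hvd⟩ := (Metric.infDist_lt_iff hVne).mp hlt
  set y₀ := L - v with hy₀def
  have hy₀n : ‖y₀‖ ≤ 1 + ε / 8 := by
    rw [hy₀def, ← dist_eq_norm]; linarith
  have hd₀ : Metric.infDist y₀ (X : Set Y) ≤ 1 := by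
    apply le_of_forall_pos_le_add
    intro t ht
    have h1 : Metric.infDist L (V : Set Y) < 1 + t := by rw [hdist]; linarith
    obtain ⟨v', hv', hv'd⟩ := (Metric.infDist_lt_iff hVne).mp h1
    have hmem : v' - v ∈ (X : Set Y) := X.sub_mem (hVX hv') (hVX hvV)
    have h2 : Metric.infDist y₀ (X : Set Y) ≤ dist y₀ (v' - v) :=
      Metric.infDist_le_dist_of_mem hmem
    have h3 : dist y₀ (v' - v) = dist L v' := by
      rw [dist_eq_norm, dist_eq_norm, hy₀def]
      congr 1
      abel
    linarith
  set δ : ℕ → ℝ := fun n => ε / 8 * (1 / 2) ^ n with hδdef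
  have hδpos : ∀ n, 0 < δ n := fun n => by positivity
  set P : ℕ → Y → Prop := fun n z =>
    ‖z‖ ≤ 1 + δ n ∧ y₀ - z ∈ X ∧ ‖y₀ - z‖ ≤ 3 * ε / 8 * (1 - (1 / 2) ^ n) with hPdef
  have hP0 : P 0 y₀ := by
    refine ⟨by simpa [hδdef] using hy₀n, by simp [X.zero_mem], by simp⟩
  have step : ∀ n z, P n z → ∃ z', P (n + 1) z' ∧ ‖z - z'‖ ≤ δ n + δ (n + 1) := by
    intro n z hz
    have hdz : Metric.infDist z (X : Set Y) ≤ 1 := by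
      apply le_of_forall_pos_le_add
      intro t ht
      have h1 : Metric.infDist y₀ (X : Set Y) < 1 + t := lt_of_le_of_lt hd₀ (by linarith)
      obtain ⟨x, hxX, hxd⟩ := (Metric.infDist_lt_iff ⟨0, X.zero_mem⟩).mp h1
      have hmem : x - (y₀ - z) ∈ (X : Set Y) := X.sub_mem hxX hz.2.1
      have h2 : Metric.infDist z (X : Set Y) ≤ dist z (x - (y₀ - z)) :=
        Metric.infDist_le_dist_of_mem hmem
      have h3 : dist z (x - (y₀ - z)) = dist y₀ x := by
        rw [dist_eq_norm, dist_eq_norm]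
        congr 1
        abel
      linarith
    obtain ⟨x, hxX, hxn, hxd⟩ := keyLemma X W hsup hL (hδpos n).le zero_le_one
      (hδpos (n + 1)) hdz (by linarith [hz.1])
    refine ⟨z - x, ⟨?_, ?_, ?_⟩, ?_⟩
    · simpa using hxd
    · have he : y₀ - (z - x) = (y₀ - z) + x := by abel
      rw [he]; exact X.add_mem hz.2.1 hxX
    · have he : y₀ - (z - x) = (y₀ - z) + x := by abel
      rw [he]
      have h4 := norm_add_le (y₀ - z) x
      have h5 := hz.2.2
      simp only [hδdef] at hxn
      rw [pow_succ] at hxn ⊢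
      linarith
    · have he : z - (z - x) = x := by abel
      rw [he]; exact hxn
  choose F hF1 hF2 using step
  let seq : ∀ n : ℕ, {z : Y // P n z} := fun n =>
    Nat.rec ⟨y₀, hP0⟩ (fun k p => ⟨F k p.1 p.2, hF1 k p.1 p.2⟩) n
  have hstep : ∀ n, ‖(seq n).1 - (seq (n + 1)).1‖ ≤ δ n + δ (n + 1) :=
    fun n => hF2 n (seq n).1 (seq n).2
  have hcauchy : CauchySeq (fun n => (seq n).1) := by
    apply cauchySeq_of_le_geometric (1/2) (3 * ε / 16) (by norm_num)
    intro n
    rw [dist_eq_norm]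
    have h1 := hstep n
    have h2 : δ n + δ (n + 1) = 3 * ε / 16 * (1 / 2) ^ n := by
      simp only [hδdef, pow_succ]
      ring
    linarith
  obtain ⟨z, hz⟩ := cauchySeq_tendsto_of_complete hcauchy
  have hδlim : Filter.Tendsto δ Filter.atTop (nhds 0) := by
    have h1 : Filter.Tendsto (fun n : ℕ => ((1:ℝ)/2)^n) Filter.atTop (nhds 0) :=
      tendsto_pow_atTop_nhds_zero_of_lt_one (by norm_num) (by norm_num)
    rw [hδdef]
    simpa using Filter.Tendsto.const_mul (ε/8) h1
  have hnorm : ‖z‖ ≤ 1 := by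
    have h1 : Filter.Tendsto (fun n => ‖(seq n).1‖) Filter.atTop (nhds ‖z‖) := hz.norm
    have h2 : Filter.Tendsto (fun n => 1 + δ n) Filter.atTop (nhds 1) := by
      simpa using Filter.Tendsto.add (tendsto_const_nhds (x := (1:ℝ))) hδlim
    exact le_of_tendsto_of_tendsto' h1 h2 fun n => (seq n).2.1
  have htd : Filter.Tendsto (fun n => y₀ - (seq n).1) Filter.atTop (nhds (y₀ - z)) :=
    Filter.Tendsto.sub tendsto_const_nhds hz
  have hzmem : y₀ - z ∈ X :=
    hX.mem_of_tendsto htd (Filter.Eventually.of_forall fun n => (seq n).2.2.1)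
  have hznorm : ‖y₀ - z‖ ≤ ε := by
    have h1 : Filter.Tendsto (fun n => ‖y₀ - (seq n).1‖) Filter.atTop (nhds ‖y₀ - z‖) :=
      htd.norm
    have h2 : ‖y₀ - z‖ ≤ 3 * ε / 8 := by
      apply le_of_tendsto h1
      apply Filter.Eventually.of_forall
      intro n
      have h3 := (seq n).2.2.2
      have h4 : (0:ℝ) ≤ (1/2)^n := by positivity
      nlinarith
    linarith
  exact ⟨v, hvV, z, hnorm, hznorm, hzmem⟩
end

section
/- Let X ⊆ Y be Banach spaces with quotient map π : Y → Y/X, and suppose that for every finite-dimensional subspace E of Y/X and every ε > 0 there is a linear map L : E → Y with π ∘ L = id_E and ‖L‖ < λ + ε (i.e., (X, Y) has λ-local liftings). Suppose moreover Y/X has the μ-bounded approximation property: for every finite-dimensional E ⊆ Y/X and ε > 0 there is a finite-rank operator S : Y/X → Y/X with S|_E = id_E and ‖S‖ < μ + ε. Then (X, Y) has λμ-extendable local liftings: for every finite-dimensional E ⊆ Y/X and ε > 0 there exists a bounded linear operator T : Y/X → Y** with ‖T‖ < λμ + ε, T(E) ⊆ Y, and π(T e) = e for all e ∈ E. -/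
open NormedSpace

/-- If `(X, Y)` has `λ`-local liftings and `Y/X` has the `μ`-bounded approximation
property, then `(X, Y)` has `λμ`-extendable local liftings. -/
theorem local_liftings_and_bap_give_extendable_local_liftings
    {Y : Type*} [NormedAddCommGroup Y] [NormedSpace ℝ Y] (X : Submodule ℝ Y)
    (lam mu : ℝ) (hlam : 1 ≤ lam) (hmu : 1 ≤ mu)
    (hll : ∀ E : Submodule ℝ (Y ⧸ X), FiniteDimensional ℝ ↥E → ∀ ε > (0 : ℝ),
      ∃ L : ↥E →L[ℝ] Y, (∀ e : ↥E, X.mkQ (L e) = (e : Y ⧸ X)) ∧ ‖L‖ < lam + ε)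
    (hbap : ∀ E : Submodule ℝ (Y ⧸ X), FiniteDimensional ℝ ↥E → ∀ ε > (0 : ℝ),
      ∃ S : (Y ⧸ X) →L[ℝ] (Y ⧸ X),
        FiniteDimensional ℝ ↥(LinearMap.range (S : (Y ⧸ X) →ₗ[ℝ] (Y ⧸ X))) ∧
        (∀ e ∈ E, S e = e) ∧ ‖S‖ < mu + ε) :
    ∀ E : Submodule ℝ (Y ⧸ X), FiniteDimensional ℝ ↥E → ∀ ε > (0 : ℝ),
      ∃ T : (Y ⧸ X) →L[ℝ] StrongDual ℝ (StrongDual ℝ Y),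
        @norm _ (ContinuousLinearMap.hasOpNorm (𝕜 := ℝ) (𝕜₂ := ℝ) (E := Y ⧸ X)
          (F := StrongDual ℝ (StrongDual ℝ Y))) T < lam * mu + ε ∧
        ∀ e ∈ E, ∃ y : Y, inclusionInDoubleDual ℝ Y y = T e ∧ X.mkQ y = e := by
  intro E hE ε hε
  have hlm : (0:ℝ) < lam + mu + 1 := by linarith
  set δ : ℝ := min 1 (ε / (lam + mu + 1)) with hδdef
  have hδ0 : 0 < δ := lt_min one_pos (div_pos hε hlm)
  have hδ1 : δ ≤ 1 := min_le_left _ _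
  have hδε : δ * (lam + mu + 1) ≤ ε := by
    have := min_le_right 1 (ε / (lam + mu + 1))
    calc δ * (lam + mu + 1) ≤ (ε / (lam + mu + 1)) * (lam + mu + 1) := by
          apply mul_le_mul_of_nonneg_right this hlm.le
      _ = ε := div_mul_cancel₀ _ hlm.ne'
  obtain ⟨S, hSfin, hSid, hSnorm⟩ := hbap E hE δ hδ0
  set F : Submodule ℝ (Y ⧸ X) := LinearMap.range (S : (Y ⧸ X) →ₗ[ℝ] (Y ⧸ X)) with hF
  obtain ⟨L, hLlift, hLnorm⟩ := hll F hSfin δ hδ0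
  have hmemF : ∀ v : Y ⧸ X, S v ∈ F := fun v => ⟨v, rfl⟩
  set S' : (Y ⧸ X) →L[ℝ] F := S.codRestrict F hmemF with hS'
  have hS'norm : ‖S'‖ ≤ ‖S‖ := by
    apply ContinuousLinearMap.opNorm_le_bound _ (norm_nonneg S)
    intro v
    exact S.le_opNorm v
  set T : (Y ⧸ X) →L[ℝ] StrongDual ℝ (StrongDual ℝ Y) :=
    (inclusionInDoubleDual ℝ Y).comp (L.comp S') with hT
  refine ⟨T, ?_, ?_⟩
  · letI : NormedAddCommGroup (StrongDual ℝ (StrongDual ℝ Y)) := ContinuousLinearMap.toNormedAddCommGroup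
    letI : NormedSpace ℝ (StrongDual ℝ (StrongDual ℝ Y)) := ContinuousLinearMap.toNormedSpace
    have h1 : ‖T‖ ≤ ‖L‖ * ‖S‖ := by
      calc ‖T‖ ≤ ‖inclusionInDoubleDual ℝ Y‖ * ‖L.comp S'‖ :=
            ContinuousLinearMap.opNorm_comp_le _ _
        _ ≤ 1 * ‖L.comp S'‖ :=
            mul_le_mul_of_nonneg_right (inclusionInDoubleDual_norm_le ℝ Y)
              (ContinuousLinearMap.opNorm_nonneg _)
        _ = ‖L.comp S'‖ := one_mul _
        _ ≤ ‖L‖ * ‖S'‖ := ContinuousLinearMap.opNorm_comp_le _ _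
        _ ≤ ‖L‖ * ‖S‖ := mul_le_mul_of_nonneg_left hS'norm (ContinuousLinearMap.opNorm_nonneg _)
    have h2 : ‖L‖ * ‖S‖ < (lam + δ) * (mu + δ) := by
      apply mul_lt_mul'' hLnorm hSnorm (ContinuousLinearMap.opNorm_nonneg _) (ContinuousLinearMap.opNorm_nonneg _)
    have h3 : (lam + δ) * (mu + δ) ≤ lam * mu + ε := by
      have : (lam + δ) * (mu + δ) = lam * mu + δ * (lam + mu + δ) := by ring
      rw [this]
      have : δ * (lam + mu + δ) ≤ δ * (lam + mu + 1) := by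
        apply mul_le_mul_of_nonneg_left _ hδ0.le
        linarith
      linarith
    linarith
  · intro e he
    refine ⟨L (S' e), rfl, ?_⟩
    have := hLlift (S' e)
    rw [this]
    have : ((S' e : F) : Y ⧸ X) = S e := rfl
    rw [this, hSid e he]
end
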